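/- arXiv:1901.00093 — 2 statements merged into one kernel-verified Lean document; each statement's English description precedes it below -/
import Mathlib

section
/- The sign pattern (+,+,+,+,−,−,−) for (L₁,...,L₆,L₇) is realized by some point of the open dual Weyl chamber C of E₇; i.e., there exists φ ∈ ℝ⁷ satisfying all seven chamber inequalities together with φ₁−φ₆>0, −φ₁+φ₂−φ₆>0, −φ₂+φ₃−φ₆>0, −φ₃+φ₄−φ₆+φ₇>0, −φ₄+φ₅−φ₆+φ₇<0, −φ₅+φ₇<0, φ₄−φ₆−φ₇<0. -/
/-- The open dual fundamental Weyl chamber of E₇ (coordinates in the basis of simple coroots);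
`φ 0, …, φ 6` stand for φ₁, …, φ₇. -/
def InDualWeylChamber (φ : Fin 7 → ℝ) : Prop :=
  2 * φ 0 - φ 1 > 0 ∧
  -φ 0 + 2 * φ 1 - φ 2 > 0 ∧
  -φ 1 + 2 * φ 2 - φ 3 - φ 6 > 0 ∧
  -φ 2 + 2 * φ 3 - φ 4 > 0 ∧
  -φ 3 + 2 * φ 4 - φ 5 > 0 ∧
  2 * φ 5 - φ 4 > 0 ∧
  2 * φ 6 - φ 2 > 0

/-- The seven linear functionals ϖ₁₉, ϖ₂₀, ϖ₂₃, ϖ₂₆, ϖ₂₉, ϖ₃₂, ϖ₃₀ of I(E₇, 56). -/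
def Lfun : Fin 7 → (Fin 7 → ℝ) → ℝ :=
  ![fun φ => φ 0 - φ 5,
    fun φ => -φ 0 + φ 1 - φ 5,
    fun φ => -φ 1 + φ 2 - φ 5,
    fun φ => -φ 2 + φ 3 - φ 5 + φ 6,
    fun φ => -φ 3 + φ 4 - φ 5 + φ 6,
    fun φ => -φ 4 + φ 6,
    fun φ => φ 3 - φ 5 - φ 6]

/-- Chamber 5 of the hyperplane arrangement I(E₇,56), with sign vector (+,+,+,+,−,−,−),
is nonempty. -/
theorem chamber5_nonempty :
    ∃ φ : Fin 7 → ℝ, InDualWeylChamber φ ∧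
      φ 0 - φ 5 > 0 ∧
      -φ 0 + φ 1 - φ 5 > 0 ∧
      -φ 1 + φ 2 - φ 5 > 0 ∧
      -φ 2 + φ 3 - φ 5 + φ 6 > 0 ∧
      -φ 3 + φ 4 - φ 5 + φ 6 < 0 ∧
      -φ 4 + φ 6 < 0 ∧
      φ 3 - φ 5 - φ 6 < 0 :=
  ⟨![23, 45, 66, 52, 36, 19, 34], by
    simp only [InDualWeylChamber, Matrix.cons_val]; norm_num⟩
end

section
/- With n_T = 9 − K², n_V = 133, n_A = g, n_F = (8 − 8g + S²)/2, h^{2,1} = 18 + 29K² + 49 K·S + 21 S², K·S = 2g−2−S², and n_H = h^{2,1} + 1 + 126 n_A + 56 n_F, the gravitational anomaly condition n_H − n_V + 29 n_T − 273 = 0 holds identically (as an identity of rational functions in g, K², S²). -/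
/-- The gravitational anomaly condition n_H − n_V + 29 n_T − 273 = 0 holds identically
for the E₇-model. -/
theorem e7_gravitational_anomaly (g K2 S2 KS : ℚ) (hadj : KS = 2 * g - 2 - S2)
    (nT nV nA nF h21 nH : ℚ)
    (hnT : nT = 9 - K2) (hnV : nV = 133) (hnA : nA = g)
    (hnF : nF = (8 - 8 * g + S2) / 2)
    (hh21 : h21 = 18 + 29 * K2 + 49 * KS + 21 * S2)
    (hnH : nH = h21 + 1 + 126 * nA + 56 * nF) :
    nH - nV + 29 * nT - 273 = 0 := by
  subst_vars
  ring
end
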